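/- Let Q : ℝ → M₂(ℂ) be measurable with ∫_ℝ ‖Q(x)‖ dx < ∞, set U(x) = [[0, Q(x)],[−Q(x)†, 0]] ∈ M₄(ℂ), σ = diag(1,1,−1,−1), and fix λ ∈ ℝ. Then there exists a unique bounded continuous function μ : ℝ → M₄(ℂ) satisfying the Volterra integral equation μ(x) = I₄ + ∫_{−∞}^{x} e^{iλ(x'−x)σ}·U(x')·μ(x')·e^{−iλ(x'−x)σ} dx' for all x ∈ ℝ. -/

import Mathlib

/-!
Conjugation by `e^{iλ(x'−x)σ}` is unitary, so the integrand is dominated by `g(x')‖μ(x')‖`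
with `g = ∑ |Uᵢⱼ|` integrable, and the Volterra operator `T μ = I₄ + ∫_{-∞}^x …` acts on
bounded continuous functions. With `H(x) = ∫_{-∞}^x g`, induction on `n` gives
`‖Tⁿμ(x) − Tⁿν(x)‖ ≤ H(x)ⁿ/n! · ‖μ − ν‖`, the step being `∫_{-∞}^x g Hⁿ = H(x)ⁿ⁺¹/(n+1)`:
integration by parts for the distribution function of the atomless measure `g dx`. Hence some
iterate of `T` is a contraction, and `T` has a unique fixed point.
-/

open scoped Matrix

/-- The potential matrix `U = [[0, Q],[−Q†, 0]]`. -/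
noncomputable def Umat (Q : ℝ → Matrix (Fin 2) (Fin 2) ℂ) :
    ℝ → Matrix (Fin 2 ⊕ Fin 2) (Fin 2 ⊕ Fin 2) ℂ :=
  fun x => Matrix.fromBlocks 0 (Q x) (-(Q x)ᴴ) 0

/-- The matrix exponential `e^{sσ} = diag(e^s, e^s, e^{−s}, e^{−s})` for
`σ = diag(1,1,−1,−1)`. -/
noncomputable def expSig (s : ℂ) : Matrix (Fin 2 ⊕ Fin 2) (Fin 2 ⊕ Fin 2) ℂ :=
  Matrix.fromBlocks (Complex.exp s • 1) 0 0 (Complex.exp (-s) • 1)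

open MeasureTheory Set
open scoped ENNReal

theorem measure_Iic_mul_measure_Iic (α β : Measure ℝ) [SFinite α] [SFinite β]
    [NullSingletonClass β] (x : ℝ) :
    α (Iic x) * β (Iic x) = ∫⁻ t in Iic x, α (Iic t) ∂β + ∫⁻ s in Iic x, β (Iic s) ∂α := by
  have hA : MeasurableSet {p : ℝ × ℝ | p.1 ≤ p.2 ∧ p.2 ≤ x} :=
    (measurableSet_le measurable_fst measurable_snd).inter
      (measurableSet_le measurable_snd measurable_const)
  have hB : MeasurableSet {p : ℝ × ℝ | p.2 < p.1 ∧ p.1 ≤ x} :=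
    (measurableSet_lt measurable_snd measurable_fst).inter
      (measurableSet_le measurable_fst measurable_const)
  have hsplit : Iic x ×ˢ Iic x =
      {p : ℝ × ℝ | p.1 ≤ p.2 ∧ p.2 ≤ x} ∪ {p : ℝ × ℝ | p.2 < p.1 ∧ p.1 ≤ x} := by
    ext ⟨s, t⟩
    simp only [mem_prod, mem_Iic, mem_union, mem_ofPred_eq]
    constructor
    · rintro ⟨hs, ht⟩
      rcases le_or_gt s t with h | h
      exacts [Or.inl ⟨h, ht⟩, Or.inr ⟨h, hs⟩]
    · rintro (⟨h, ht⟩ | ⟨h, hs⟩)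
      exacts [⟨h.trans ht, ht⟩, ⟨hs, h.le.trans hs⟩]
  have hdisj :
      Disjoint {p : ℝ × ℝ | p.1 ≤ p.2 ∧ p.2 ≤ x} {p : ℝ × ℝ | p.2 < p.1 ∧ p.1 ≤ x} :=
    disjoint_left.2 fun p h h' => (not_le.2 h'.1) h.1
  rw [← Measure.prod_prod, hsplit, measure_union hdisj hB, Measure.prod_apply_symm hA,
    Measure.prod_apply hB, ← lintegral_indicator measurableSet_Iic,
    ← lintegral_indicator measurableSet_Iic]
  congr 1
  · refine lintegral_congr fun t => ?_
    by_cases ht : t ≤ x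
    · simp [ht, Iic, indicator_of_mem]
    · simp [ht]
  · refine lintegral_congr fun s => ?_
    by_cases hs : s ≤ x
    · simp [hs, Iio, indicator_of_mem, ← measure_congr Iio_ae_eq_Iic]
    · simp [hs]

theorem natCast_add_one_mul_lintegral_Iic_measure_Iic_pow (α : Measure ℝ) [SFinite α]
    [NullSingletonClass α] (n : ℕ) (x : ℝ) :
    (n + 1) * ∫⁻ t in Iic x, α (Iic t) ^ n ∂α = α (Iic x) ^ (n + 1) := by
  have hF : Measurable fun t => α (Iic t) :=
    Monotone.measurable fun _ _ h => measure_mono (Iic_subset_Iic.2 h)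
  induction n generalizing x with
  | zero => simp
  | succ n ih =>
    -- integration by parts against `β = α(Iic ·)ⁿ dα`, whose distribution function `ih` knows
    set β := α.withDensity fun t => α (Iic t) ^ n
    have hβ : ∀ t, (n + 1) * β (Iic t) = α (Iic t) ^ (n + 1) := fun t => by
      rw [withDensity_apply _ measurableSet_Iic, ih]
    have hparts := measure_Iic_mul_measure_Iic α β x
    rw [setLIntegral_withDensity_eq_setLIntegral_mul _ (hF.pow_const n) hF measurableSet_Iic]
      at hparts
    calc ((n + 1 : ℕ) + 1 : ℝ≥0∞) * ∫⁻ t in Iic x, α (Iic t) ^ (n + 1) ∂α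
        = (n + 1) * ∫⁻ t in Iic x, α (Iic t) ^ n * α (Iic t) ∂α
          + ∫⁻ s in Iic x, (n + 1) * β (Iic s) ∂α := by
          simp only [hβ, ← pow_succ]
          push_cast
          ring
      _ = (n + 1) * (α (Iic x) * β (Iic x)) := by
          rw [hparts, mul_add, lintegral_const_mul' _ _ (by simp)]
          rfl
      _ = α (Iic x) ^ (n + 1 + 1) := by rw [mul_left_comm, hβ, ← pow_succ']

theorem monotone_integral_Iic {g : ℝ → ℝ} (hg : Integrable g) (hg0 : 0 ≤ g) :
    Monotone fun x => ∫ t in Iic x, g t := fun _ _ h =>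
  setIntegral_mono_set hg.integrableOn (ae_of_all _ hg0) (Iic_subset_Iic.2 h).eventuallyLE

theorem natCast_add_one_mul_integral_Iic_mul_pow {g : ℝ → ℝ} (hg : Integrable g) (hg0 : 0 ≤ g)
    (n : ℕ) (x : ℝ) :
    (n + 1) * ∫ t in Iic x, g t * (∫ s in Iic t, g s) ^ n = (∫ s in Iic x, g s) ^ (n + 1) := by
  set H : ℝ → ℝ := fun t => ∫ s in Iic t, g s
  have hH0 : ∀ t, 0 ≤ H t := fun t => setIntegral_nonneg measurableSet_Iic fun s _ => hg0 s
  set α := volume.withDensity fun t => ENNReal.ofReal (g t)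
  have hα : ∀ t, α (Iic t) = ENNReal.ofReal (H t) := fun t => by
    rw [withDensity_apply _ measurableSet_Iic,
      ofReal_integral_eq_lintegral_ofReal hg.integrableOn (ae_of_all _ hg0)]
  have hαIic : Measurable fun t => α (Iic t) :=
    Monotone.measurable fun _ _ h => measure_mono (Iic_subset_Iic.2 h)
  have hlint :
      ∫⁻ t in Iic x, ENNReal.ofReal (g t * H t ^ n) = ∫⁻ t in Iic x, α (Iic t) ^ n ∂α := by
    rw [setLIntegral_withDensity_eq_lintegral_mul₀ hg.aemeasurable.ennreal_ofReal
      (hαIic.pow_const n).aemeasurable measurableSet_Iic]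
    refine lintegral_congr fun t => ?_
    rw [Pi.mul_apply, ENNReal.ofReal_mul (hg0 t), ENNReal.ofReal_pow (hH0 t), hα]
  rw [integral_eq_lintegral_of_nonneg_ae
    (ae_of_all _ fun t => mul_nonneg (hg0 t) (pow_nonneg (hH0 t) n))
    (hg.aestronglyMeasurable.mul
      ((monotone_integral_Iic hg hg0).measurable.pow_const n).aestronglyMeasurable).restrict,
    hlint]
  have := congrArg ENNReal.toReal (natCast_add_one_mul_lintegral_Iic_measure_Iic_pow α n x)
  rwa [ENNReal.toReal_mul, ENNReal.toReal_pow, hα, ENNReal.toReal_ofReal (hH0 x)] at this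

theorem continuous_setIntegral_Iic {E : Type*} [NormedAddCommGroup E] [NormedSpace ℝ E]
    {F : ℝ → ℝ → E} {bound : ℝ → ℝ} (hFm : ∀ x, AEStronglyMeasurable (F x))
    (hbound : ∀ x t, ‖F x t‖ ≤ bound t) (hint : Integrable bound)
    (hcont : ∀ t, Continuous fun x => F x t) :
    Continuous fun x => ∫ t in Iic x, F x t := by
  simp only [← integral_indicator measurableSet_Iic]
  refine continuous_iff_continuousAt.2 fun x₀ => continuousAt_of_dominated
    (.of_forall fun x => (hFm x).indicator measurableSet_Iic)
    (.of_forall fun x => ae_of_all _ fun t =>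
      (norm_indicator_le_norm_self _ _).trans (hbound x t))
    hint ((Measure.ae_ne volume x₀).mono fun t ht => ?_)
  rcases ht.lt_or_gt with h | h
  · refine (hcont t).continuousAt.congr (eventually_gt_nhds h |>.mono fun x hx => ?_)
    exact (indicator_of_mem (mem_Iic.2 hx.le) _).symm
  · refine (continuousAt_const (y := (0 : E))).congr (eventually_lt_nhds h |>.mono fun x hx => ?_)
    exact (indicator_of_notMem (notMem_Iic.2 hx) _).symm

open scoped BoundedContinuousFunction Nat

section

variable {E : Type*} [NormedAddCommGroup E]

structure IsVolterraKernel (k : ℝ → ℝ → E → E) (g : ℝ → ℝ) : Prop where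
  integrable : Integrable g
  nonneg : 0 ≤ g
  aestronglyMeasurable : ∀ x (μ : ℝ →ᵇ E), AEStronglyMeasurable fun t => k x t (μ t)
  continuous : ∀ t u, Continuous fun x => k x t u
  map_zero : ∀ x t, k x t 0 = 0
  lipschitz : ∀ x t u v, ‖k x t u - k x t v‖ ≤ g t * ‖u - v‖

namespace IsVolterraKernel

variable {k : ℝ → ℝ → E → E} {g : ℝ → ℝ}

theorem norm_le (hk : IsVolterraKernel k g) (x t : ℝ) (u : E) : ‖k x t u‖ ≤ g t * ‖u‖ := by
  simpa [hk.map_zero] using hk.lipschitz x t u 0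

theorem norm_apply_le (hk : IsVolterraKernel k g) (μ : ℝ →ᵇ E) (x t : ℝ) :
    ‖k x t (μ t)‖ ≤ g t * ‖μ‖ :=
  (hk.norm_le x t _).trans (mul_le_mul_of_nonneg_left (μ.norm_coe_le_norm t) (hk.nonneg t))

theorem integrable_apply (hk : IsVolterraKernel k g) (μ : ℝ →ᵇ E) (x : ℝ) :
    Integrable fun t => k x t (μ t) :=
  (hk.integrable.mul_const ‖μ‖).mono' (hk.aestronglyMeasurable x μ)
    (ae_of_all _ (hk.norm_apply_le μ x))

variable [NormedSpace ℝ E]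

theorem continuous_integral_Iic (hk : IsVolterraKernel k g) (μ : ℝ →ᵇ E) :
    Continuous fun x => ∫ t in Iic x, k x t (μ t) :=
  continuous_setIntegral_Iic (hk.aestronglyMeasurable · μ) (hk.norm_apply_le μ)
    (hk.integrable.mul_const ‖μ‖) fun t => hk.continuous t (μ t)

theorem norm_integral_Iic_le (hk : IsVolterraKernel k g) (μ : ℝ →ᵇ E) (x : ℝ) :
    ‖∫ t in Iic x, k x t (μ t)‖ ≤ (∫ t, g t) * ‖μ‖ :=
  calc ‖∫ t in Iic x, k x t (μ t)‖ ≤ ∫ t in Iic x, g t * ‖μ‖ :=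
        norm_integral_le_of_norm_le (hk.integrable.mul_const _).integrableOn
          (ae_of_all _ (hk.norm_apply_le μ x))
    _ ≤ ∫ t, g t * ‖μ‖ := setIntegral_le_integral (hk.integrable.mul_const _)
          (ae_of_all _ fun t => mul_nonneg (hk.nonneg t) (norm_nonneg μ))
    _ = (∫ t, g t) * ‖μ‖ := integral_mul_const _ _

noncomputable def volterraOp (hk : IsVolterraKernel k g) (f μ : ℝ →ᵇ E) : ℝ →ᵇ E :=
  .ofNormedAddCommGroup (fun x => f x + ∫ t in Iic x, k x t (μ t))
    (f.continuous.add (hk.continuous_integral_Iic μ)) (‖f‖ + (∫ t, g t) * ‖μ‖) fun x =>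
      (norm_add_le _ _).trans (add_le_add (f.norm_coe_le_norm x) (hk.norm_integral_Iic_le μ x))

theorem volterraOp_apply (hk : IsVolterraKernel k g) (f μ : ℝ →ᵇ E) (x : ℝ) :
    hk.volterraOp f μ x = f x + ∫ t in Iic x, k x t (μ t) := rfl

theorem dist_volterraOp_apply_le (hk : IsVolterraKernel k g) (f μ ν : ℝ →ᵇ E) (x : ℝ)
    {δ : ℝ → ℝ} (hδ : ∀ t, dist (μ t) (ν t) ≤ δ t)
    (hgδ : IntegrableOn (fun t => g t * δ t) (Iic x)) :
    dist (hk.volterraOp f μ x) (hk.volterraOp f ν x) ≤ ∫ t in Iic x, g t * δ t := by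
  rw [volterraOp_apply, volterraOp_apply, dist_add_left, dist_eq_norm,
    ← integral_sub (hk.integrable_apply μ x).integrableOn (hk.integrable_apply ν x).integrableOn]
  refine norm_integral_le_of_norm_le hgδ (ae_of_all _ fun t => ?_)
  simp only [dist_eq_norm] at hδ
  exact (hk.lipschitz x t _ _).trans (mul_le_mul_of_nonneg_left (hδ t) (hk.nonneg t))

theorem dist_iterate_volterraOp_apply_le (hk : IsVolterraKernel k g) (f μ ν : ℝ →ᵇ E) (n : ℕ)
    (x : ℝ) :
    dist ((hk.volterraOp f)^[n] μ x) ((hk.volterraOp f)^[n] ν x) ≤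
      dist μ ν * (∫ t in Iic x, g t) ^ n / n ! := by
  induction n generalizing x with
  | zero => simpa using BoundedContinuousFunction.dist_coe_le_dist x
  | succ n ih =>
    set H : ℝ → ℝ := fun x => ∫ t in Iic x, g t
    have hH0 : ∀ t, 0 ≤ H t := fun t =>
      setIntegral_nonneg measurableSet_Iic fun s _ => hk.nonneg s
    have hint : Integrable fun t => g t * (dist μ ν * H t ^ n / n !) := by
      refine hk.integrable.mul_bdd (c := dist μ ν * (∫ s, g s) ^ n / n !)
        (((monotone_integral_Iic hk.integrable hk.nonneg).measurable.pow_const n).const_mul _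
          |>.div_const _).aestronglyMeasurable (ae_of_all _ fun t => ?_)
      rw [Real.norm_of_nonneg (by have := hH0 t; positivity)]
      gcongr
      exacts [hH0 t, setIntegral_le_integral hk.integrable (ae_of_all _ hk.nonneg)]
    rw [Function.iterate_succ_apply', Function.iterate_succ_apply']
    refine (hk.dist_volterraOp_apply_le f _ _ x ih hint.integrableOn).trans_eq ?_
    simp only [mul_div_assoc', mul_left_comm (g _), integral_div, integral_const_mul]
    rw [Nat.factorial_succ, Nat.cast_mul,
      ← natCast_add_one_mul_integral_Iic_mul_pow hk.integrable hk.nonneg n x]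
    push_cast
    field_simp

theorem dist_iterate_volterraOp_le (hk : IsVolterraKernel k g) (f μ ν : ℝ →ᵇ E) (n : ℕ) :
    dist ((hk.volterraOp f)^[n] μ) ((hk.volterraOp f)^[n] ν) ≤
      (∫ t, g t) ^ n / n ! * dist μ ν := by
  have hL : 0 ≤ ∫ t, g t := integral_nonneg hk.nonneg
  refine (BoundedContinuousFunction.dist_le (by positivity)).2 fun x => ?_
  have hH0 : 0 ≤ ∫ t in Iic x, g t := setIntegral_nonneg measurableSet_Iic fun s _ => hk.nonneg s
  have hHL : ∫ t in Iic x, g t ≤ ∫ t, g t :=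
    setIntegral_le_integral hk.integrable (ae_of_all _ hk.nonneg)
  calc _ ≤ dist μ ν * (∫ t in Iic x, g t) ^ n / n ! :=
        hk.dist_iterate_volterraOp_apply_le f μ ν n x
    _ ≤ dist μ ν * (∫ t, g t) ^ n / n ! := by gcongr
    _ = (∫ t, g t) ^ n / n ! * dist μ ν := by ring

theorem existsUnique_eq_add_integral_Iic [CompleteSpace E] (hk : IsVolterraKernel k g)
    (f : ℝ →ᵇ E) :
    ∃! μ : ℝ →ᵇ E, ∀ x, μ x = f x + ∫ t in Iic x, k x t (μ t) := by
  have hfix (μ : ℝ →ᵇ E) : Function.IsFixedPt (hk.volterraOp f) μ ↔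
      ∀ x, μ x = f x + ∫ t in Iic x, k x t (μ t) :=
    BoundedContinuousFunction.ext_iff.trans (forall_congr' fun x => eq_comm)
  set L := ∫ t, g t
  have hL : 0 ≤ L := integral_nonneg hk.nonneg
  obtain ⟨n, hn⟩ := ((FloorSemiring.tendsto_pow_div_factorial_atTop L).eventually_lt_const
    zero_lt_one).exists
  have hcontr : ContractingWith ⟨L ^ n / n !, by positivity⟩ (hk.volterraOp f)^[n] :=
    ⟨hn, LipschitzWith.of_dist_le_mul (hk.dist_iterate_volterraOp_le f · · n)⟩
  simp only [← hfix]
  exact ⟨_, hcontr.isFixedPt_fixedPoint_iterate,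
    fun μ hμ => hcontr.fixedPoint_unique (hμ.iterate n)⟩

end IsVolterraKernel

end

theorem integral_apply_apply {X ι κ E : Type*} [MeasurableSpace X] [Fintype ι] [Fintype κ]
    [NormedAddCommGroup E] [NormedSpace ℝ E] [CompleteSpace E] {μ : Measure X}
    {F : X → ι → κ → E} (hF : Integrable F μ) (i : ι) (j : κ) :
    (∫ x, F x ∂μ) i j = ∫ x, F x i j ∂μ := by
  rw [eval_integral hF.eval i, eval_integral (hF.eval i).eval j]

section SpinOne

open Matrix Complex

variable {Q : ℝ → Matrix (Fin 2) (Fin 2) ℂ}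

noncomputable def sigmaPhase (s : ℂ) : Fin 2 ⊕ Fin 2 → ℂ :=
  Sum.elim (fun _ => exp s) (fun _ => exp (-s))

theorem expSig_eq_diagonal (s : ℂ) : expSig s = diagonal (sigmaPhase s) := by
  ext (a | a) (b | b) <;> simp [expSig, sigmaPhase, one_apply, diagonal_apply]

theorem norm_sigmaPhase {s : ℂ} (hs : s.re = 0) (a : Fin 2 ⊕ Fin 2) : ‖sigmaPhase s a‖ = 1 := by
  cases a <;> simp [sigmaPhase, norm_exp, hs]

theorem continuous_sigmaPhase (a : Fin 2 ⊕ Fin 2) : Continuous fun s => sigmaPhase s a := by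
  cases a <;> simp only [sigmaPhase, Sum.elim_inl, Sum.elim_inr] <;> fun_prop

theorem integrable_Umat_apply (hint : ∀ a b, Integrable fun x => Q x a b)
    (a b : Fin 2 ⊕ Fin 2) : Integrable fun t => Umat Q t a b := by
  cases a <;> cases b <;> simp only [Umat, fromBlocks_apply₁₁, fromBlocks_apply₁₂,
    fromBlocks_apply₂₁, fromBlocks_apply₂₂, Matrix.zero_apply, Matrix.neg_apply,
    conjTranspose_apply]
  · exact integrable_zero _ _ _
  · exact hint _ _
  · exact (conjLIE.toLinearIsometry.toContinuousLinearMap.integrable_comp (hint _ _)).neg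
  · exact integrable_zero _ _ _

noncomputable def spinKernel (Q : ℝ → Matrix (Fin 2) (Fin 2) ℂ) (lam x t : ℝ)
    (u : Fin 2 ⊕ Fin 2 → Fin 2 ⊕ Fin 2 → ℂ) : Fin 2 ⊕ Fin 2 → Fin 2 ⊕ Fin 2 → ℂ :=
  expSig (I * lam * (t - x)) * Umat Q t * of u * expSig (-(I * lam * (t - x)))

theorem spinKernel_apply (lam x t : ℝ) (u : Fin 2 ⊕ Fin 2 → Fin 2 ⊕ Fin 2 → ℂ)
    (a b : Fin 2 ⊕ Fin 2) :
    spinKernel Q lam x t u a b = sigmaPhase (I * lam * (t - x)) a *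
      (∑ j, Umat Q t a j * u j b) * sigmaPhase (-(I * lam * (t - x))) b := by
  rw [spinKernel, expSig_eq_diagonal, expSig_eq_diagonal, mul_diagonal, Matrix.mul_assoc,
    diagonal_mul, mul_apply]
  rfl

theorem spinKernel_sub (lam x t : ℝ) (u v : Fin 2 ⊕ Fin 2 → Fin 2 ⊕ Fin 2 → ℂ) :
    spinKernel Q lam x t u - spinKernel Q lam x t v = spinKernel Q lam x t (u - v) := by
  ext a b
  simp only [Pi.sub_apply, spinKernel_apply, mul_sub, sub_mul, Finset.sum_sub_distrib]

noncomputable def spinBound (Q : ℝ → Matrix (Fin 2) (Fin 2) ℂ) (t : ℝ) : ℝ :=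
  ∑ a, ∑ b, ‖Umat Q t a b‖

theorem spinBound_nonneg : 0 ≤ spinBound Q := fun _ => by unfold spinBound; positivity

theorem norm_spinKernel_le (lam x t : ℝ) (u : Fin 2 ⊕ Fin 2 → Fin 2 ⊕ Fin 2 → ℂ) :
    ‖spinKernel Q lam x t u‖ ≤ spinBound Q t * ‖u‖ := by
  have hre : (I * lam * (t - x)).re = 0 := by simp
  have h0 : 0 ≤ spinBound Q t * ‖u‖ := mul_nonneg (spinBound_nonneg t) (norm_nonneg u)
  refine (pi_norm_le_iff_of_nonneg h0).2 fun a => (pi_norm_le_iff_of_nonneg h0).2 fun b => ?_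
  rw [spinKernel_apply, norm_mul, norm_mul, norm_sigmaPhase hre, norm_sigmaPhase (by simp [hre]),
    one_mul, mul_one]
  calc ‖∑ j, Umat Q t a j * u j b‖ ≤ ∑ j, ‖Umat Q t a j‖ * ‖u‖ :=
        (norm_sum_le _ _).trans <| Finset.sum_le_sum fun j _ => by
          rw [norm_mul]; gcongr; exact (norm_le_pi_norm (u j) b).trans (norm_le_pi_norm u j)
    _ ≤ spinBound Q t * ‖u‖ := by
        rw [← Finset.sum_mul]
        gcongr
        exact Finset.single_le_sum (f := fun a => ∑ j, ‖Umat Q t a j‖)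
          (fun _ _ => by positivity) (Finset.mem_univ a)

theorem aemeasurable_spinKernel_apply (hint : ∀ a b, Integrable fun x => Q x a b) (lam x : ℝ)
    {μ : ℝ → Fin 2 ⊕ Fin 2 → Fin 2 ⊕ Fin 2 → ℂ} (hμ : Continuous μ) :
    AEMeasurable fun t => spinKernel Q lam x t (μ t) := by
  refine aemeasurable_pi_lambda _ fun a => aemeasurable_pi_lambda _ fun b => ?_
  simp only [spinKernel_apply]
  have hphase (s : ℝ → ℂ) (hs : Continuous s) (i : Fin 2 ⊕ Fin 2) :
      AEMeasurable fun t => sigmaPhase (s t) i :=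
    ((continuous_sigmaPhase i).comp hs).measurable.aemeasurable
  have hμ' (j : Fin 2 ⊕ Fin 2) : AEMeasurable fun t => μ t j b :=
    ((continuous_apply_apply j b).comp hμ).measurable.aemeasurable
  have h1 : Continuous fun t : ℝ => I * lam * ((t : ℂ) - x) := by fun_prop
  have h2 : Continuous fun t : ℝ => -(I * lam * ((t : ℂ) - x)) := by fun_prop
  exact ((hphase _ h1 a).mul (Finset.aemeasurable_fun_sum _ fun j _ =>
    (integrable_Umat_apply hint a j).aemeasurable.mul (hμ' j))).mul (hphase _ h2 b)

theorem continuous_spinKernel (lam t : ℝ) (u : Fin 2 ⊕ Fin 2 → Fin 2 ⊕ Fin 2 → ℂ) :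
    Continuous fun x => spinKernel Q lam x t u := by
  refine continuous_pi fun a => continuous_pi fun b => ?_
  simp only [spinKernel_apply]
  exact (((continuous_sigmaPhase a).comp (by fun_prop)).mul continuous_const).mul
    ((continuous_sigmaPhase b).comp (by fun_prop))

theorem isVolterraKernel_spinKernel (hint : ∀ a b, Integrable fun x => Q x a b) (lam : ℝ) :
    IsVolterraKernel (spinKernel Q lam) (spinBound Q) where
  integrable := integrable_finsetSum _ fun a _ => integrable_finsetSum _ fun b _ =>
    (integrable_Umat_apply hint a b).norm
  nonneg := spinBound_nonneg
  aestronglyMeasurable x μ :=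
    (aemeasurable_spinKernel_apply hint lam x μ.continuous).aestronglyMeasurable
  continuous := continuous_spinKernel lam
  map_zero x t := by
    ext a b
    simp [spinKernel_apply]
  lipschitz x t u v := by
    rw [spinKernel_sub]
    exact norm_spinKernel_le lam x t (u - v)

theorem eq_add_integral_spinKernel_iff (hint : ∀ a b, Integrable fun x => Q x a b) (lam : ℝ)
    (μ : ℝ →ᵇ (Fin 2 ⊕ Fin 2 → Fin 2 ⊕ Fin 2 → ℂ)) (x : ℝ) :
    μ x = of.symm 1 + ∫ t in Iic x, spinKernel Q lam x t (μ t) ↔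
      ∀ a b, μ x a b = (1 : Matrix (Fin 2 ⊕ Fin 2) (Fin 2 ⊕ Fin 2) ℂ) a b +
        ∫ t in Iic x, spinKernel Q lam x t (μ t) a b := by
  simp only [funext_iff, Pi.add_apply, integral_apply_apply
    ((isVolterraKernel_spinKernel hint lam).integrable_apply μ x).integrableOn]
  rfl

end SpinOne

theorem volterra_existence_uniqueness_general (Q : ℝ → Matrix (Fin 2) (Fin 2) ℂ)
    (hint : ∀ a b, MeasureTheory.Integrable fun x => Q x a b)
    (lam : ℝ) :
    ∃! μ : ℝ → Matrix (Fin 2 ⊕ Fin 2) (Fin 2 ⊕ Fin 2) ℂ,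
      (∀ a b, Continuous fun x => μ x a b) ∧
      (∃ C : ℝ, ∀ x a b, ‖μ x a b‖ ≤ C) ∧
      (∀ x a b, μ x a b = (1 : Matrix (Fin 2 ⊕ Fin 2) (Fin 2 ⊕ Fin 2) ℂ) a b +
        ∫ x' in Set.Iic x,
          (expSig (Complex.I * lam * ((x' : ℂ) - (x : ℂ))) * Umat Q x' * μ x' *
            expSig (-(Complex.I * lam * ((x' : ℂ) - (x : ℂ))))) a b) := by
  obtain ⟨p, hp, hp_unique⟩ :=
    (isVolterraKernel_spinKernel hint lam).existsUnique_eq_add_integral_Iic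
      (.const ℝ (Matrix.of.symm 1))
  refine ⟨fun x => Matrix.of (p x), ⟨fun a b => by fun_prop, ⟨‖p‖, fun x a b => ?_⟩,
    fun x => (eq_add_integral_spinKernel_iff hint lam p x).1 (hp x)⟩, ?_⟩
  · exact (norm_le_pi_norm _ b).trans ((norm_le_pi_norm _ a).trans (p.norm_coe_le_norm x))
  rintro ν ⟨hν_cont, ⟨C, hC⟩, hν⟩
  have hC0 : 0 ≤ C := (norm_nonneg _).trans (hC 0 (.inl 0) (.inl 0))
  let νb : ℝ →ᵇ (Fin 2 ⊕ Fin 2 → Fin 2 ⊕ Fin 2 → ℂ) :=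
    .ofNormedAddCommGroup ν (continuous_pi fun a => continuous_pi (hν_cont a)) C fun x =>
      (pi_norm_le_iff_of_nonneg hC0).2 fun a => (pi_norm_le_iff_of_nonneg hC0).2 (hC x a)
  have hνp : νb = p :=
    hp_unique νb fun x => (eq_add_integral_spinKernel_iff hint lam νb x).2 (hν x)
  funext x
  exact congrArg (fun μ => Matrix.of (μ x)) hνp

/-- If `Q : ℝ → M₂(ℂ)` is measurable and integrable, then for each `λ ∈ ℝ` there is a
unique bounded continuous `μ : ℝ → M₄(ℂ)` solving the Volterra integral equation
`μ(x) = I₄ + ∫_{−∞}^{x} e^{iλ(x'−x)σ} U(x') μ(x') e^{−iλ(x'−x)σ} dx'`. -/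
theorem volterra_existence_uniqueness (Q : ℝ → Matrix (Fin 2) (Fin 2) ℂ)
    (hmeas : ∀ a b, Measurable fun x => Q x a b)
    (hint : ∀ a b, MeasureTheory.Integrable fun x => Q x a b)
    (lam : ℝ) :
    ∃! μ : ℝ → Matrix (Fin 2 ⊕ Fin 2) (Fin 2 ⊕ Fin 2) ℂ,
      (∀ a b, Continuous fun x => μ x a b) ∧
      (∃ C : ℝ, ∀ x a b, ‖μ x a b‖ ≤ C) ∧
      (∀ x a b, μ x a b = (1 : Matrix (Fin 2 ⊕ Fin 2) (Fin 2 ⊕ Fin 2) ℂ) a b +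
        ∫ x' in Set.Iic x,
          (expSig (Complex.I * lam * ((x' : ℂ) - (x : ℂ))) * Umat Q x' * μ x' *
            expSig (-(Complex.I * lam * ((x' : ℂ) - (x : ℂ))))) a b) :=
  volterra_existence_uniqueness_general Q hint lam
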